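/- Suppose for every real x > 89693 there is a prime in the interval (x, x + x/(ln x)³). Then for all n with p_n > 89693, (ln p_{n+1})⁴ - (ln p_n)⁴ < 4. -/

import Mathlib

/-- `prime n` is the n-th prime, with `prime 1 = 2`. -/
noncomputable def prime (n : ℕ) : ℕ := Nat.nth Nat.Prime (n - 1)

/-!
With `L = log p_n`, the hypothesis gives `p_{n+1} < p_n (1 + L⁻³)`, so
`log p_{n+1} = L + t` with `0 ≤ t ≤ log (1 + L⁻³)`. Since `log (1 + u) ≤ u - u² / 4` for small `u`,
the linear term of `(L + t)⁴ - L⁴` is at most `4 - L⁻³`, and the saving `L⁻³` absorbs the higher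
order terms `6 L² t² + 4 L t³ + t⁴ = O(L⁻⁴)` as soon as `L ≥ 7`, which holds because `p_n > e⁷`.
-/

lemma prime_le_prime_succ (n : ℕ) : prime n ≤ prime (n + 1) :=
  Nat.nth_monotone Nat.infinite_setOfPred_prime (by omega)

lemma prime_succ_le_of_lt {n q : ℕ} (hq : q.Prime) (h : prime n < q) : prime (n + 1) ≤ q := by
  cases n with
  | zero => exact h.le
  | succ k => exact not_lt.1 fun h' => h.not_ge (Nat.le_nth_of_lt_nth_succ h' hq)

lemma log_one_add_le {u : ℝ} (hu0 : 0 ≤ u) (hu : u ≤ 1 / 5) :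
    Real.log (1 + u) ≤ u - u ^ 2 / 4 := by
  have htaylor := Real.abs_log_sub_add_sum_range_le (x := -u)
    (by rw [abs_neg, abs_of_nonneg hu0]; linarith) 2
  norm_num [Finset.sum_range_succ, abs_of_nonneg hu0] at htaylor
  have hcube : u ^ 3 / (1 - u) ≤ u ^ 2 / 4 := by
    rw [div_le_iff₀ (by linarith)]
    nlinarith [pow_nonneg hu0 2]
  linarith [(abs_le.1 htaylor).2]

lemma add_pow_four_sub_pow_four_lt_four {L t : ℝ} (hL : 7 ≤ L) (ht0 : 0 ≤ t)
    (ht : t ≤ (L ^ 3)⁻¹ - (L ^ 3)⁻¹ ^ 2 / 4) : (L + t) ^ 4 - L ^ 4 < 4 := by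
  set u := (L ^ 3)⁻¹
  have hL0 : 0 < L := by linarith
  have huL : u * L ^ 3 = 1 := inv_mul_cancel₀ (by positivity)
  have hu0 : 0 < u := by positivity
  have htu : t ≤ u := by nlinarith
  have hu1 : u ≤ 1 := by nlinarith [pow_le_pow_left₀ (by norm_num) hL 3]
  have hlinear : 4 * L ^ 3 * t ≤ 4 - u := by
    nlinarith [mul_le_mul_of_nonneg_left ht (by positivity : (0 : ℝ) ≤ 4 * L ^ 3)]
  have hcubic : 6 * L ^ 2 + 4 * L * u + u ^ 2 < L ^ 3 := by
    nlinarith [mul_le_mul_of_nonneg_left hL (by positivity : (0 : ℝ) ≤ L ^ 2)]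
  have hhigher : 6 * L ^ 2 * t ^ 2 + 4 * L * t ^ 3 + t ^ 4 < u := by
    have h2 := pow_le_pow_left₀ ht0 htu 2
    have h3 := pow_le_pow_left₀ ht0 htu 3
    have h4 := pow_le_pow_left₀ ht0 htu 4
    calc 6 * L ^ 2 * t ^ 2 + 4 * L * t ^ 3 + t ^ 4
        ≤ u ^ 2 * (6 * L ^ 2 + 4 * L * u + u ^ 2) := by nlinarith
      _ < u ^ 2 * L ^ 3 := by gcongr
      _ = u := by rw [sq, mul_assoc, huL, mul_one]
  have hexpand : (L + t) ^ 4 - L ^ 4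
      = 4 * L ^ 3 * t + (6 * L ^ 2 * t ^ 2 + 4 * L * t ^ 3 + t ^ 4) := by ring
  linarith

lemma pow_four_sub_pow_four_lt_four {L A : ℝ} (hL : 7 ≤ L) (hLA : L ≤ A)
    (hA : A ≤ L + Real.log (1 + (L ^ 3)⁻¹)) : A ^ 4 - L ^ 4 < 4 := by
  have hu : (L ^ 3)⁻¹ ≤ 1 / 5 := by
    rw [inv_le_comm₀ (by positivity) (by norm_num)]
    nlinarith [pow_le_pow_left₀ (by norm_num) hL 3]
  simpa using add_pow_four_sub_pow_four_lt_four hL (t := A - L) (by linarith)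
    (by linarith [log_one_add_le (by positivity) hu])

lemma exp_seven_lt : Real.exp 7 < 2187 := by
  have h := pow_lt_pow_left₀ Real.exp_one_lt_three (Real.exp_pos 1).le (by norm_num : 7 ≠ 0)
  rw [Real.exp_one_pow] at h
  norm_num at h
  exact h

theorem log_pow_four_bound
    (h : ∀ x : ℝ, 89693 < x →
      ∃ q : ℕ, q.Prime ∧ x < q ∧ (q : ℝ) < x + x / Real.log x ^ 3) :
    ∀ n : ℕ, 89693 < (prime n : ℝ) →
      Real.log (prime (n+1)) ^ 4 - Real.log (prime n) ^ 4 < 4 := by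
  intro n hn
  obtain ⟨q, hq, hpq, hqlt⟩ := h _ hn
  have hp0 : (0 : ℝ) < prime n := by linarith
  have hL : 7 ≤ Real.log (prime n) := by
    rw [Real.le_log_iff_exp_le hp0]
    linarith [exp_seven_lt]
  have hpP : (prime n : ℝ) ≤ prime (n + 1) := by exact_mod_cast prime_le_prime_succ n
  have hPq : (prime (n + 1) : ℝ) ≤ q := by
    exact_mod_cast prime_succ_le_of_lt hq (by exact_mod_cast hpq)
  refine pow_four_sub_pow_four_lt_four hL (Real.log_le_log hp0 hpP) ?_
  calc Real.log (prime (n + 1)) ≤ Real.log q := Real.log_le_log (by linarith) hPq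
    _ ≤ Real.log (prime n * (1 + (Real.log (prime n) ^ 3)⁻¹)) := by
      refine Real.log_le_log (by linarith) ?_
      rw [mul_add, mul_one, ← div_eq_mul_inv]
      exact hqlt.le
    _ = Real.log (prime n) + Real.log (1 + (Real.log (prime n) ^ 3)⁻¹) :=
      Real.log_mul hp0.ne' (by positivity)
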